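/- For all natural numbers n and m with m ≥ n, the dual-complex Pell quaternions satisfy the d'Ocagne identity DCP_m·DCP_{n+1} − DCP_{m+1}·DCP_n = (−1)^n·2·P_{m−n}·(1 + i + 6ε + 6iε). -/
import Mathlib


def pell : ℕ → ℤ
  | 0 => 0
  | 1 => 1
  | (n + 2) => 2 * pell (n + 1) + pell n

/-- The dual-complex Pell quaternion DCP_n = P_n + i P_{n+1} + ε P_{n+2} + iε P_{n+3},
as an element of the dual-complex numbers ℂ[ε] (with i² = -1, ε² = 0). -/
noncomputable def DCP (n : ℕ) : DualNumber ℂ :=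
  (pell n : DualNumber ℂ)
    + algebraMap ℂ (DualNumber ℂ) Complex.I * (pell (n + 1) : DualNumber ℂ)
    + DualNumber.eps * (pell (n + 2) : DualNumber ℂ)
    + algebraMap ℂ (DualNumber ℂ) Complex.I * DualNumber.eps * (pell (n + 3) : DualNumber ℂ)

lemma DCP_rec (n : ℕ) : DCP (n+2) = 2 * DCP (n+1) + DCP n := by
  simp only [DCP, show n+2+1 = n+3 from rfl, show n+2+2 = n+4 from rfl,
    show n+2+3 = n+5 from rfl, show n+1+1 = n+2 from rfl, show n+1+2 = n+3 from rfl,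
    show n+1+3 = n+4 from rfl]
  rw [show pell (n+5) = 2*pell (n+4) + pell (n+3) from rfl,
      show pell (n+4) = 2*pell (n+3) + pell (n+2) from rfl,
      show pell (n+3) = 2*pell (n+2) + pell (n+1) from rfl,
      show pell (n+2) = 2*pell (n+1) + pell n from rfl]
  push_cast
  ring

lemma ha : algebraMap ℂ (DualNumber ℂ) Complex.I * algebraMap ℂ (DualNumber ℂ) Complex.I
    = -1 := by
  rw [← map_mul, Complex.I_mul_I, map_neg, map_one]

lemma he : (DualNumber.eps : DualNumber ℂ) * DualNumber.eps = 0 :=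
  DualNumber.eps_mul_eps

lemma Qlem (n : ℕ) : DCP (n+1) * DCP (n+1) - DCP (n+2) * DCP n =
    (-1) ^ n * 2 * (1 + algebraMap ℂ (DualNumber ℂ) Complex.I
      + 6 * DualNumber.eps
      + 6 * (algebraMap ℂ (DualNumber ℂ) Complex.I * DualNumber.eps)) := by
  induction n with
  | zero =>
    simp only [DCP, pow_zero, show (0:ℕ)+1 = 1 from rfl, show (0:ℕ)+2 = 2 from rfl,
      show (0:ℕ)+3 = 3 from rfl, show (1:ℕ)+1 = 2 from rfl, show (1:ℕ)+2 = 3 from rfl,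
      show (1:ℕ)+3 = 4 from rfl, show (2:ℕ)+1 = 3 from rfl, show (2:ℕ)+2 = 4 from rfl,
      show (2:ℕ)+3 = 5 from rfl]
    rw [show pell 0 = 0 from rfl, show pell 1 = 1 from rfl, show pell 2 = 2 from rfl,
      show pell 3 = 5 from rfl, show pell 4 = 12 from rfl, show pell 5 = 29 from rfl]
    push_cast
    linear_combination (-(1:DualNumber ℂ) - 6*DualNumber.eps) * ha
      + (1 + 2*algebraMap ℂ (DualNumber ℂ) Complex.I
        - algebraMap ℂ (DualNumber ℂ) Complex.I * algebraMap ℂ (DualNumber ℂ) Complex.I) * he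
  | succ n ih =>
    have h2 := DCP_rec n
    have h3 := DCP_rec (n+1)
    linear_combination (-1 : DualNumber ℂ) * ih + DCP (n+2) * h2 - DCP (n+1) * h3

lemma key (k : ℕ) : ∀ n : ℕ, DCP (n+k) * DCP (n+1) - DCP (n+k+1) * DCP n =
    (-1) ^ n * 2 * (pell k : DualNumber ℂ)
      * (1 + algebraMap ℂ (DualNumber ℂ) Complex.I
        + 6 * DualNumber.eps
        + 6 * (algebraMap ℂ (DualNumber ℂ) Complex.I * DualNumber.eps)) := by
  induction k using Nat.strong_induction_on with
  | _ k ih =>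
    match k with
    | 0 =>
      intro n
      rw [show pell 0 = 0 from rfl]
      push_cast
      ring
    | 1 =>
      intro n
      rw [show pell 1 = 1 from rfl]
      push_cast
      have := Qlem n
      rw [show n+1+1 = n+2 from rfl]
      linear_combination this
    | (k+2) =>
      intro n
      have h1 := ih (k+1) (by omega) n
      have h0 := ih k (by omega) n
      have r1 := DCP_rec (n+k)
      have r2 := DCP_rec (n+k+1)
      rw [show n+(k+1) = n+k+1 from rfl, show n+k+1+1 = n+k+2 from rfl] at h1
      rw [show n+k+1+1 = n+k+2 from rfl, show n+k+1+2 = n+k+3 from rfl] at r2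
      rw [show pell (k+2) = 2*pell (k+1) + pell k from rfl]
      push_cast
      rw [show n+(k+2) = n+k+2 from rfl, show n+k+2+1 = n+k+3 from rfl]
      linear_combination 2 * h1 + h0 + DCP (n+1) * r1 - DCP n * r2

theorem DCP_docagne (n m : ℕ) (h : n ≤ m) :
    DCP m * DCP (n + 1) - DCP (m + 1) * DCP n =
      (-1) ^ n * 2 * (pell (m - n) : DualNumber ℂ)
        * (1 + algebraMap ℂ (DualNumber ℂ) Complex.I
          + 6 * DualNumber.eps
          + 6 * (algebraMap ℂ (DualNumber ℂ) Complex.I * DualNumber.eps)) := by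
  obtain ⟨k, rfl⟩ : ∃ k, m = n + k := ⟨m - n, (Nat.add_sub_cancel' h).symm⟩
  rw [Nat.add_sub_cancel_left]
  exact key k n
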